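/- For m×n nonnegative integer matrices M and N, the lexicographic expression of the product x^M x^N in R^{(t)} is x^M x^N = q^α x^{M+N} + Σ_L α_L x^L for some integer α and scalars α_L ∈ K, where every L with α_L ≠ 0 satisfies L ≺ M+N in the matrix lexicographic order. Consequently, if x^M divides x^N, then x^N = q^α x^M x^{N−M} + Σ_L α_L x^L with every such L ≺ N. -/

import Mathlib

noncomputable section

namespace QM

/-- 1-indexed rank of a coordinate of `[m] × [n]` in the lexicographic order. -/
def idx {m n : ℕ} (p : Fin m × Fin n) : ℕ := p.1.1 * n + p.2.1 + 1

/-- `q` is not a root of unity. -/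
def NotRootOfUnity {K : Type*} [Field K] (q : K) : Prop := ∀ k : ℕ, 0 < k → q ^ k ≠ 1

/-- `B` is (the set of black squares of) a Cauchon diagram. -/
def IsCauchon {m n : ℕ} (B : Set (Fin m × Fin n)) : Prop :=
  ∀ p ∈ B, (∀ j' : Fin n, j' < p.2 → (p.1, j') ∈ B) ∨ (∀ i' : Fin m, i' < p.1 → (i', p.2) ∈ B)

/-! ### The quantum torus, presented by generators and relations -/

/-- Generators of the quantum torus: a generator `t_{i,j}` and its inverse for each coordinate. -/
inductive TGen (m n : ℕ) : Type
  | pos : Fin m → Fin n → TGen m n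
  | neg : Fin m → Fin n → TGen m n

variable (K : Type*) [Field K]

def Tp (m n : ℕ) (i : Fin m) (j : Fin n) : FreeAlgebra K (TGen m n) :=
  FreeAlgebra.ι K (TGen.pos i j)

def Tm (m n : ℕ) (i : Fin m) (j : Fin n) : FreeAlgebra K (TGen m n) :=
  FreeAlgebra.ι K (TGen.neg i j)

/-- The defining relations of the `m × n` quantum torus. -/
inductive TorusRel (m n : ℕ) (q : K) :
    FreeAlgebra K (TGen m n) → FreeAlgebra K (TGen m n) → Prop
  | mulInv : ∀ (i : Fin m) (j : Fin n), TorusRel m n q (Tp K m n i j * Tm K m n i j) 1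
  | invMul : ∀ (i : Fin m) (j : Fin n), TorusRel m n q (Tm K m n i j * Tp K m n i j) 1
  | rowRel : ∀ {i : Fin m} {j l : Fin n}, j < l →
      TorusRel m n q (Tp K m n i j * Tp K m n i l) (q • (Tp K m n i l * Tp K m n i j))
  | colRel : ∀ {i k : Fin m} {j : Fin n}, i < k →
      TorusRel m n q (Tp K m n i j * Tp K m n k j) (q • (Tp K m n k j * Tp K m n i j))
  | commRel : ∀ {i k : Fin m} {j l : Fin n}, i ≠ k → j ≠ l →
      TorusRel m n q (Tp K m n i j * Tp K m n k l) (Tp K m n k l * Tp K m n i j)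

/-- The `m × n` quantum torus `O_q((K^*)^{m×n})`. -/
abbrev QTorus (m n : ℕ) (q : K) := RingQuot (TorusRel K m n q)

/-- The generator `t_{i,j}` of the quantum torus. -/
def tq (m n : ℕ) (q : K) (i : Fin m) (j : Fin n) : QTorus K m n q :=
  RingQuot.mkAlgHom K (TorusRel K m n q) (Tp K m n i j)

/-- The inverse generator `t_{i,j}⁻¹` of the quantum torus. -/
def tqi (m n : ℕ) (q : K) (i : Fin m) (j : Fin n) : QTorus K m n q :=
  RingQuot.mkAlgHom K (TorusRel K m n q) (Tm K m n i j)

/-- The list of all coordinates of `[m] × [n]` in increasing lexicographic order. -/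
def coordList (m n : ℕ) : List (Fin m × Fin n) :=
  (List.finRange m).flatMap fun i => (List.finRange n).map fun j => (i, j)

/-- `t_{i,j}^z` for an integer `z`. -/
def tzpow (m n : ℕ) (q : K) (i : Fin m) (j : Fin n) (z : ℤ) : QTorus K m n q :=
  if 0 ≤ z then tq K m n q i j ^ z.toNat else tqi K m n q i j ^ (-z).toNat

/-- The lexicographic term `t^N` of the quantum torus, `N` an integer matrix. -/
def tpow (m n : ℕ) (q : K) (N : Matrix (Fin m) (Fin n) ℤ) : QTorus K m n q :=
  ((coordList m n).map fun p => tzpow K m n q p.1 p.2 (N p.1 p.2)).prod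

/-! ### Cauchon graphs and paths -/

/-- Vertices of a Cauchon graph: white vertices, row vertices and column vertices. -/
inductive V (m n : ℕ) : Type
  | white : Fin m → Fin n → V m n
  | row : Fin m → V m n
  | col : Fin n → V m n
deriving DecidableEq

/-- Directed edges of the Cauchon graph `G_B^{m×n}`. -/
inductive Edge {m n : ℕ} (B : Set (Fin m × Fin n)) : V m n → V m n → Prop
  | horiz : ∀ {i : Fin m} {j j' : Fin n}, j' < j → (i, j) ∉ B → (i, j') ∉ B →
      (∀ j'' : Fin n, j' < j'' → j'' < j → (i, j'') ∈ B) →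
      Edge B (V.white i j) (V.white i j')
  | vert : ∀ {i i' : Fin m} {j : Fin n}, i < i' → (i, j) ∉ B → (i', j) ∉ B →
      (∀ i'' : Fin m, i < i'' → i'' < i' → (i'', j) ∈ B) →
      Edge B (V.white i j) (V.white i' j)
  | fromRow : ∀ {i : Fin m} {j : Fin n}, (i, j) ∉ B →
      (∀ j' : Fin n, j < j' → (i, j') ∈ B) → Edge B (V.row i) (V.white i j)
  | toCol : ∀ {i : Fin m} {j : Fin n}, (i, j) ∉ B →
      (∀ i' : Fin m, i < i' → (i', j) ∈ B) → Edge B (V.white i j) (V.col j)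

/-- The weight of an edge of a Cauchon graph, as an element of the quantum torus. -/
def ew (m n : ℕ) (q : K) : V m n → V m n → QTorus K m n q
  | V.white i j, V.white i' j' => if i = i' then tqi K m n q i j * tq K m n q i j' else 1
  | V.row _, V.white i j => tq K m n q i j
  | _, _ => 1

/-- The weight of a list of vertices: ordered product of the weights of consecutive edges. -/
def wtList (m n : ℕ) (q : K) : List (V m n) → QTorus K m n q
  | [] => 1
  | [_] => 1
  | a :: b :: rest => ew K m n q a b * wtList m n q (b :: rest)

/-- A (directed, vertex-disjoint) path in the Cauchon graph `G_B^{m×n}`. -/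
structure CPath (m n : ℕ) (B : Set (Fin m × Fin n)) : Type where
  verts : List (V m n)
  nonempty : verts ≠ []
  chain : verts.Chain' (Edge B)
  nodup : verts.Nodup

/-- The starting vertex of a path. -/
def CPath.first {m n : ℕ} {B : Set (Fin m × Fin n)} (P : CPath m n B) : V m n :=
  P.verts.head P.nonempty

/-- The ending vertex of a path. -/
def CPath.last {m n : ℕ} {B : Set (Fin m × Fin n)} (P : CPath m n B) : V m n :=
  P.verts.getLast P.nonempty

/-- The weight `w(P)` of a path. -/
def CPath.wt {m n : ℕ} (q : K) {B : Set (Fin m × Fin n)} (P : CPath m n B) : QTorus K m n q :=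
  wtList K m n q P.verts

/-- Whether an (oriented) edge between these two vertices is vertical. -/
def isVertV {m n : ℕ} : V m n → V m n → Bool
  | V.white _ j, V.white _ j' => j == j'
  | V.white _ _, V.col _ => true
  | _, _ => false

/-- Whether an (oriented) edge between these two vertices is horizontal. -/
def isHorizV {m n : ℕ} : V m n → V m n → Bool
  | V.white i _, V.white i' _ => i == i'
  | V.row _, V.white _ _ => true
  | _, _ => false

/-- The vertex list `L` has a `⌐`-turn (Le-turn) at the white vertex `(a,b)`:
it enters `(a,b)` by a vertical edge and leaves it by a horizontal edge. -/
def HasLeTurnAt {m n : ℕ} (L : List (V m n)) (a : Fin m) (b : Fin n) : Prop :=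
  ∃ u w : V m n, List.IsInfix [u, V.white a b, w] L ∧
    isVertV u (V.white a b) = true ∧ isHorizV (V.white a b) w = true

/-- `Γ_B^{(t)}(i,j)`: the paths from row vertex `i` to column vertex `j` with no `⌐`-turn at a
white vertex larger than the `t`-th smallest coordinate. -/
def Gamma {m n : ℕ} (B : Set (Fin m × Fin n)) (t : ℕ) (i : Fin m) (j : Fin n) :
    Set (CPath m n B) :=
  {P | P.first = V.row i ∧ P.last = V.col j ∧
    ∀ (a : Fin m) (b : Fin n), t < idx (a, b) → ¬ HasLeTurnAt P.verts a b}

/-- The generator `x_{i,j}` of `A_B^{(t)}`: the sum of the weights of all paths in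
`Γ_B^{(t)}(i,j)`. -/
def XB (m n : ℕ) (q : K) (B : Set (Fin m × Fin n)) (t : ℕ) (i : Fin m) (j : Fin n) :
    QTorus K m n q :=
  ∑ᶠ P ∈ Gamma B t i j, CPath.wt K q P

/-- The subalgebra `A_B^{(t)}` of the quantum torus. -/
def ABalg (m n : ℕ) (q : K) (B : Set (Fin m × Fin n)) (t : ℕ) : Subalgebra K (QTorus K m n q) :=
  Algebra.adjoin K (Set.range fun p : Fin m × Fin n => XB K m n q B t p.1 p.2)

/-- The localization `A_B^{(t)}[x_{r,s}^{-1}]`, realized inside the quantum torus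
(note `x_{r,s} = t_{r,s}`). -/
def ABlocAlg (m n : ℕ) (q : K) (B : Set (Fin m × Fin n)) (t : ℕ) (r : Fin m) (s : Fin n) :
    Subalgebra K (QTorus K m n q) :=
  Algebra.adjoin K
    (Set.range (fun p : Fin m × Fin n => XB K m n q B t p.1 p.2) ∪ {tqi K m n q r s})

/-- A family of paths is pairwise vertex-disjoint. -/
def SysDisjoint {m n : ℕ} {B : Set (Fin m × Fin n)} {k : ℕ} (P : Fin k → CPath m n B) : Prop :=
  ∀ a b : Fin k, a ≠ b → ∀ v ∈ (P a).verts, v ∉ (P b).verts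

/-- `Γ_B^{(t)}(I|J)`: vertex-disjoint path systems from the row vertices `I` to the column
vertices `J`. -/
def GammaSys {m n : ℕ} (B : Set (Fin m × Fin n)) (t k : ℕ) (I : Fin k → Fin m)
    (J : Fin k → Fin n) : Set (Fin k → CPath m n B) :=
  {P | (∀ a, P a ∈ Gamma B t (I a) (J a)) ∧ SysDisjoint P}

/-- The weight of a path system: the ordered product of the weights of its paths. -/
def sysWt {m n : ℕ} (q : K) {B : Set (Fin m × Fin n)} {k : ℕ} (P : Fin k → CPath m n B) :
    QTorus K m n q :=
  ((List.finRange k).map fun a => CPath.wt K q (P a)).prod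

/-- The number of inversions of a permutation of `Fin k`. -/
def inversions {k : ℕ} (σ : Equiv.Perm (Fin k)) : ℕ :=
  (Finset.univ.filter fun p : Fin k × Fin k => p.1 < p.2 ∧ σ p.2 < σ p.1).card

/-- The quantum minor `[I|J]_B^{(t)}` of `A_B^{(t)}`, as an element of the quantum torus. -/
def qminor (m n : ℕ) (q : K) (B : Set (Fin m × Fin n)) (t : ℕ) (k : ℕ)
    (I : Fin k → Fin m) (J : Fin k → Fin n) : QTorus K m n q :=
  ∑ σ : Equiv.Perm (Fin k),
    ((-q) ^ inversions σ) • ((List.finRange k).map fun a => XB K m n q B t (I a) (J (σ a))).prod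

/-! ### The algebras `R^{(t)}`, presented by generators and relations -/

def xf (m n : ℕ) (p : Fin m × Fin n) : FreeAlgebra K (Fin m × Fin n) := FreeAlgebra.ι K p

/-- The defining relations of the algebra `R^{(t)}`. -/
inductive RRel (m n : ℕ) (q : K) (t : ℕ) :
    FreeAlgebra K (Fin m × Fin n) → FreeAlgebra K (Fin m × Fin n) → Prop
  | rowRel : ∀ {i : Fin m} {j l : Fin n}, j < l →
      RRel m n q t (xf K m n (i, j) * xf K m n (i, l)) (q • (xf K m n (i, l) * xf K m n (i, j)))
  | colRel : ∀ {i k : Fin m} {j : Fin n}, i < k →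
      RRel m n q t (xf K m n (i, j) * xf K m n (k, j)) (q • (xf K m n (k, j) * xf K m n (i, j)))
  | antiDiag : ∀ {i k : Fin m} {j l : Fin n}, i < k → j < l →
      RRel m n q t (xf K m n (i, l) * xf K m n (k, j)) (xf K m n (k, j) * xf K m n (i, l))
  | diagComm : ∀ {i k : Fin m} {j l : Fin n}, i < k → j < l → t < idx (k, l) →
      RRel m n q t (xf K m n (i, j) * xf K m n (k, l)) (xf K m n (k, l) * xf K m n (i, j))
  | diagQ : ∀ {i k : Fin m} {j l : Fin n}, i < k → j < l → idx (k, l) ≤ t →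
      RRel m n q t (xf K m n (i, j) * xf K m n (k, l))
        (xf K m n (k, l) * xf K m n (i, j) + (q - q⁻¹) • (xf K m n (i, l) * xf K m n (k, j)))

/-- The algebra `R^{(t)}` (`R^{(1)}` is quantum affine space, `R^{(mn)}` is quantum matrices). -/
abbrev Rt (m n : ℕ) (q : K) (t : ℕ) := RingQuot (RRel K m n q t)

/-- The standard generator `x_{i,j}` of `R^{(t)}`. -/
def rx (m n : ℕ) (q : K) (t : ℕ) (i : Fin m) (j : Fin n) : Rt K m n q t :=
  RingQuot.mkAlgHom K (RRel K m n q t) (xf K m n (i, j))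

/-- The lexicographic term `x^M` of `R^{(t)}`. -/
def rxpow (m n : ℕ) (q : K) (t : ℕ) (M : Matrix (Fin m) (Fin n) ℕ) : Rt K m n q t :=
  ((coordList m n).map fun p => rx K m n q t p.1 p.2 ^ M p.1 p.2).prod

/-- The quantum minor `[I|J]^{(t)}` of `R^{(t)} ≅ A^{(t)}`. -/
def rminor (m n : ℕ) (q : K) (t : ℕ) (k : ℕ) (I : Fin k → Fin m) (J : Fin k → Fin n) :
    Rt K m n q t :=
  ∑ σ : Equiv.Perm (Fin k),
    ((-q) ^ inversions σ) • ((List.finRange k).map fun a => rx K m n q t (I a) (J (σ a))).prod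

/-- The diagonal subminor of the minor indexed by `(I, J)` determined by a subset `s` of the
index set. -/
def minorOfFinset (m n : ℕ) (q : K) (t : ℕ) {k : ℕ} (I : Fin k → Fin m) (J : Fin k → Fin n)
    (s : Finset (Fin k)) : Rt K m n q t :=
  rminor K m n q t s.card (fun a => ((s.orderIsoOfFin rfl a : s) : Fin k) |> I)
    (fun a => ((s.orderIsoOfFin rfl a : s) : Fin k) |> J)

/-! ### The matrix lexicographic order, lexicographic expressions, leading terms -/

/-- `M ≺ N` at the coordinate `p` (matrix lexicographic order): the entries agree at all
coordinates before `p` and `M p < N p`. -/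
def MLexLtAt {m n : ℕ} {R : Type*} [LT R] (M N : Matrix (Fin m) (Fin n) R)
    (p : Fin m × Fin n) : Prop :=
  M p.1 p.2 < N p.1 p.2 ∧ ∀ p' : Fin m × Fin n, idx p' < idx p → M p'.1 p'.2 = N p'.1 p'.2

/-- The matrix lexicographic order `M ≺ N`. -/
def MLexLt {m n : ℕ} {R : Type*} [LT R] (M N : Matrix (Fin m) (Fin n) R) : Prop :=
  ∃ p : Fin m × Fin n, MLexLtAt M N p

/-- `c` is the (unique) lexicographic expression of `a ∈ R^{(t)}`. -/
def IsLexRep (m n : ℕ) (q : K) (t : ℕ) (a : Rt K m n q t)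
    (c : Matrix (Fin m) (Fin n) ℕ →₀ K) : Prop :=
  a = c.sum fun N r => r • rxpow K m n q t N

/-- `x^M` is the leading term of `a ∈ R^{(t)}` with respect to the matrix lexicographic order. -/
def IsLeadMat (m n : ℕ) (q : K) (t : ℕ) (a : Rt K m n q t)
    (M : Matrix (Fin m) (Fin n) ℕ) : Prop :=
  ∃ c, IsLexRep K m n q t a c ∧ M ∈ c.support ∧ ∀ L ∈ c.support, L ≠ M → MLexLt L M

/-- The permutation matrix `P_σ` associated to index sets `(I, J)` and a permutation `σ`. -/
def permMat {m n k : ℕ} (I : Fin k → Fin m) (J : Fin k → Fin n) (σ : Equiv.Perm (Fin k)) :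
    Matrix (Fin m) (Fin n) ℕ :=
  fun i j => (Finset.univ.filter fun a : Fin k => I a = i ∧ J (σ a) = j).card

/-- The elementary matrix `E_{i,j}`. -/
def Emat {m n : ℕ} (i : Fin m) (j : Fin n) : Matrix (Fin m) (Fin n) ℕ :=
  fun i' j' => if i' = i ∧ j' = j then 1 else 0

/-- The lexicographic term `x^N` formed from the generators of `A_B^{(t)}` in the
quantum torus. -/
def xTermQ (m n : ℕ) (q : K) (B : Set (Fin m × Fin n)) (t : ℕ)
    (N : Matrix (Fin m) (Fin n) ℕ) : QTorus K m n q :=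
  ((coordList m n).map fun p => XB K m n q B t p.1 p.2 ^ N p.1 p.2).prod

/-- `c` is the lexicographic expression of `a` in terms of the generators of `A_B^{(t)}`. -/
def IsXRep (m n : ℕ) (q : K) (B : Set (Fin m × Fin n)) (t : ℕ) (a : QTorus K m n q)
    (c : Matrix (Fin m) (Fin n) ℕ →₀ K) : Prop :=
  a = c.sum fun N r => r • xTermQ K m n q B t N

/-- The lexicographic term `y^N` of the localization `A_B^{(t')}[y_{r,s}^{-1}]`, where the
`(r,s)` entry of `N` may be negative. -/
def LocTerm (m n : ℕ) (q : K) (B : Set (Fin m × Fin n)) (t' : ℕ) (r : Fin m) (s : Fin n)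
    (N : Matrix (Fin m) (Fin n) ℤ) : QTorus K m n q :=
  ((coordList m n).map fun p =>
    if p = (r, s) then
      (if 0 ≤ N r s then XB K m n q B t' r s ^ (N r s).toNat
        else tqi K m n q r s ^ (-(N r s)).toNat)
    else XB K m n q B t' p.1 p.2 ^ (N p.1 p.2).toNat).prod

/-- `c` is the lexicographic expression of `a` in the localization `A_B^{(t')}[y_{r,s}^{-1}]`. -/
def IsLocRep (m n : ℕ) (q : K) (B : Set (Fin m × Fin n)) (t' : ℕ) (r : Fin m) (s : Fin n)
    (a : QTorus K m n q) (c : Matrix (Fin m) (Fin n) ℤ →₀ K) : Prop :=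
  (∀ N ∈ c.support, ∀ p : Fin m × Fin n, p ≠ (r, s) → 0 ≤ N p.1 p.2) ∧
  a = c.sum fun N α => α • LocTerm K m n q B t' r s N

/-! ### The path `U(P,Q)` -/

/-- Auxiliary function computing the vertex list of `U(P,Q)`: between consecutive common
vertices of `P` and `Q`, follow whichever subpath is above the other. -/
def upperAux {m n : ℕ} : ℕ → List (V m n) → List (V m n) → List (V m n)
  | 0, _, _ => []
  | _ + 1, [], _ => []
  | _ + 1, _, [] => []
  | fuel + 1, p :: ps, q :: qs =>
    match ps.filter (fun v => qs.contains v) with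
    | [] => [p]
    | v :: _ =>
      (if isHorizV p (ps.headD p) then p :: ps.takeWhile (fun x => x != v)
        else q :: qs.takeWhile (fun x => x != v)) ++
        upperAux fuel (ps.dropWhile fun x => x != v) (qs.dropWhile fun x => x != v)

/-- The vertex list of the path `U(P,Q)`. -/
def upperList {m n : ℕ} {B : Set (Fin m × Fin n)} (P Q : CPath m n B) : List (V m n) :=
  upperAux (P.verts.length + Q.verts.length) P.verts Q.verts

/-!
Straightening. A product of generators along a word equals `q^α x^D`, where `D` is the exponent
matrix of the word, modulo the span of the lexicographic terms `x^L` with `L ≺ D`. The word is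
sorted by adjacent transpositions: each defining relation swaps two generators up to a power of
`q`, except `x_{k,l} x_{i,j} = x_{i,j} x_{k,l} - (q - q⁻¹) x_{i,l} x_{k,j}` (`i < k`, `j < l`,
`(k,l) ≤ (r,s)`), whose correction term has exponent matrix `≺ D` because it loses the entry at
`(i,j)`, the least of the four coordinates. The induction runs over the exponent matrix, which is
well-founded under `≺`, and then over the number of inversions of the word.
-/

section Coordinates

variable {m n : ℕ}

lemma idx_eq_finProdFinEquiv_add_one (p : Fin m × Fin n) : idx p = finProdFinEquiv p + 1 := by
  simp only [idx, finProdFinEquiv_apply_val]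
  ring

lemma idx_injective : Function.Injective (idx : Fin m × Fin n → ℕ) := fun p p' h => by
  simp only [idx_eq_finProdFinEquiv_add_one, Nat.add_right_cancel_iff] at h
  exact finProdFinEquiv.injective (Fin.ext h)

lemma idx_lt_idx_iff {i k : Fin m} {j l : Fin n} :
    idx (i, j) < idx (k, l) ↔ i < k ∨ i = k ∧ j < l := by
  have hj := j.2
  have hl := l.2
  simp only [idx, Fin.lt_def, Fin.ext_iff]
  constructor
  · intro h
    rcases lt_trichotomy i.1 k.1 with hik | hik | hik
    · exact Or.inl hik
    · exact Or.inr ⟨hik, by rw [hik] at h; omega⟩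
    · nlinarith
  · rintro (hik | ⟨hik, hjl⟩)
    · nlinarith
    · rw [hik]; omega

end Coordinates

section MatrixLex

variable {m n : ℕ} {R : Type*}

lemma mLexLt_iff_piLex [LT R] {M N : Matrix (Fin m) (Fin n) R} :
    MLexLt M N ↔ Pi.Lex (fun p p' : Fin m × Fin n => idx p < idx p') (· < ·)
      (fun p => M p.1 p.2) (fun p => N p.1 p.2) :=
  exists_congr fun _ => and_comm

lemma wellFounded_mLexLt [LT R] [WellFoundedLT R] :
    WellFounded (MLexLt : Matrix (Fin m) (Fin n) R → Matrix (Fin m) (Fin n) R → Prop) := by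
  have : IsStrictTotalOrder (Fin m × Fin n) (fun p p' => idx p < idx p') :=
    { trichotomous := fun _ _ h h' => idx_injective (le_antisymm (not_lt.1 h') (not_lt.1 h))
      irrefl := fun _ => lt_irrefl _
      trans := fun _ _ _ => lt_trans }
  exact Subrelation.wf (fun h => mLexLt_iff_piLex.1 h)
    (InvImage.wf (fun (M : Matrix (Fin m) (Fin n) R) (p : Fin m × Fin n) => M p.1 p.2)
      (Pi.Lex.wellFounded _ fun _ => wellFounded_lt))

lemma MLexLt.trans [Preorder R] {L M N : Matrix (Fin m) (Fin n) R}
    (hLM : MLexLt L M) (hMN : MLexLt M N) : MLexLt L N := by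
  obtain ⟨p, hp, hp'⟩ := hLM
  obtain ⟨r, hr, hr'⟩ := hMN
  rcases lt_trichotomy (idx p) (idx r) with h | h | h
  · exact ⟨p, hr' p h ▸ hp, fun s hs => (hp' s hs).trans (hr' s (hs.trans h))⟩
  · obtain rfl := idx_injective h
    exact ⟨p, hp.trans hr, fun s hs => (hp' s hs).trans (hr' s hs)⟩
  · exact ⟨r, (hp' r h).symm ▸ hr, fun s hs => (hp' s (hs.trans h)).trans (hr' s hs)⟩

lemma MLexLt.add_left [Add R] [LT R] [AddLeftStrictMono R] {L N : Matrix (Fin m) (Fin n) R}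
    (h : MLexLt L N) (A : Matrix (Fin m) (Fin n) R) : MLexLt (A + L) (A + N) :=
  let ⟨p, hp, hp'⟩ := h
  ⟨p, add_lt_add_right hp _, fun s hs => congrArg (A s.1 s.2 + ·) (hp' s hs)⟩

lemma MLexLt.add_right [Add R] [LT R] [AddRightStrictMono R] {L N : Matrix (Fin m) (Fin n) R}
    (h : MLexLt L N) (A : Matrix (Fin m) (Fin n) R) : MLexLt (L + A) (N + A) :=
  let ⟨p, hp, hp'⟩ := h
  ⟨p, add_lt_add_left hp _, fun s hs => congrArg (· + A s.1 s.2) (hp' s hs)⟩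

end MatrixLex

section Words

variable {m n : ℕ}

def expMatrix (w : List (Fin m × Fin n)) : Matrix (Fin m) (Fin n) ℕ :=
  fun i j => w.count (i, j)

lemma expMatrix_append (u v : List (Fin m × Fin n)) :
    expMatrix (u ++ v) = expMatrix u + expMatrix v := by
  ext i j
  simp [expMatrix]

lemma expMatrix_perm {u v : List (Fin m × Fin n)} (h : u.Perm v) : expMatrix u = expMatrix v := by
  ext i j
  exact h.count_eq _

def sortedWord (M : Matrix (Fin m) (Fin n) ℕ) : List (Fin m × Fin n) :=
  (coordList m n).flatMap fun p => List.replicate (M p.1 p.2) p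

lemma coordList_pairwise : (coordList m n).Pairwise (fun p p' => idx p < idx p') := by
  refine List.pairwise_flatMap.2 ⟨fun i _ => ?_, (List.pairwise_lt_finRange m).imp ?_⟩
  · exact List.pairwise_map.2 <| (List.pairwise_lt_finRange n).imp
      fun h => idx_lt_idx_iff.2 (Or.inr ⟨rfl, h⟩)
  · intro i k hik p hp p' hp'
    obtain ⟨j, -, rfl⟩ := List.mem_map.1 hp
    obtain ⟨l, -, rfl⟩ := List.mem_map.1 hp'
    exact idx_lt_idx_iff.2 (Or.inl hik)

lemma mem_coordList (p : Fin m × Fin n) : p ∈ coordList m n :=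
  List.mem_flatMap.2
    ⟨p.1, List.mem_finRange _, List.mem_map.2 ⟨p.2, List.mem_finRange _, rfl⟩⟩

lemma List.count_flatMap_replicate {α : Type*} [BEq α] [LawfulBEq α] (f : α → ℕ)
    (l : List α) (a : α) :
    (l.flatMap fun b => List.replicate (f b) b).count a = l.count a * f a := by
  induction l with
  | nil => simp
  | cons b l ih =>
    rw [List.flatMap_cons, List.count_append, ih, List.count_replicate, List.count_cons]
    by_cases hb : b = a
    · subst hb
      simp only [BEq.rfl, ↓reduceIte]
      ring
    · simp [hb]

lemma expMatrix_sortedWord (M : Matrix (Fin m) (Fin n) ℕ) : expMatrix (sortedWord M) = M := by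
  ext i j
  refine (List.count_flatMap_replicate (fun p : Fin m × Fin n => M p.1 p.2) (coordList m n)
    (i, j)).trans ?_
  rw [List.count_eq_one_of_mem (coordList_pairwise.imp fun h => ne_of_apply_ne idx h.ne)
    (mem_coordList _), one_mul]

lemma pairwise_sortedWord (M : Matrix (Fin m) (Fin n) ℕ) :
    (sortedWord M).Pairwise (fun p p' => idx p ≤ idx p') := by
  refine List.pairwise_flatMap.2 ⟨fun p _ => List.pairwise_replicate.2 (Or.inr le_rfl), ?_⟩
  refine coordList_pairwise.imp fun h p hp p' hp' => ?_
  rw [List.eq_of_mem_replicate hp, List.eq_of_mem_replicate hp']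
  exact h.le

lemma eq_sortedWord_expMatrix_of_isChain {w : List (Fin m × Fin n)}
    (hw : w.IsChain (fun p p' => idx p ≤ idx p')) : w = sortedWord (expMatrix w) := by
  have hsorted : w.Pairwise (fun p p' => idx p ≤ idx p') :=
    List.pairwise_map.1 ((List.isChain_map idx).2 hw).pairwise
  refine List.Perm.eq_of_pairwise (fun p p' _ _ h h' => idx_injective (h.antisymm h'))
    hsorted (pairwise_sortedWord _) (List.perm_iff_count.2 fun p => ?_)
  exact (congrFun (congrFun (expMatrix_sortedWord (expMatrix w)) p.1) p.2).symm

def numInversions : List (Fin m × Fin n) → ℕ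
  | [] => 0
  | a :: w => w.countP (fun b => idx b < idx a) + numInversions w

lemma numInversions_swap_lt (u v : List (Fin m × Fin n)) {a b : Fin m × Fin n}
    (h : idx b < idx a) :
    numInversions (u ++ b :: a :: v) < numInversions (u ++ a :: b :: v) := by
  induction u with
  | nil =>
    simp only [List.nil_append, numInversions, List.countP_cons_of_pos, List.countP_cons_of_neg,
      h, h.not_gt, decide_true, decide_false, Bool.false_eq_true, not_false_eq_true]
    omega
  | cons c u ih =>
    simp only [List.cons_append, numInversions]
    rw [((List.Perm.swap a b v).append_left u).countP_eq]
    omega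

lemma List.exists_eq_append_cons_cons_of_not_isChain {α : Type*} {R : α → α → Prop} :
    ∀ {w : List α}, ¬ w.IsChain R → ∃ u a b v, w = u ++ a :: b :: v ∧ ¬ R a b
  | [], h => absurd List.IsChain.nil h
  | [a], h => absurd (List.IsChain.singleton a) h
  | a :: b :: w, h => by
    by_cases hab : R a b
    · obtain ⟨u, c, d, v, hw, hcd⟩ :=
        exists_eq_append_cons_cons_of_not_isChain fun hw =>
          h (List.isChain_cons_cons.2 ⟨hab, hw⟩)
      exact ⟨a :: u, c, d, v, by rw [hw, List.cons_append], hcd⟩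
    · exact ⟨[], a, b, w, rfl, hab⟩

end Words

section Straightening

variable {K} {m n : ℕ} {q : K} {t : ℕ}

def wordProd (q : K) (t : ℕ) (w : List (Fin m × Fin n)) : Rt K m n q t :=
  (w.map fun p => rx K m n q t p.1 p.2).prod

lemma wordProd_append (u v : List (Fin m × Fin n)) :
    wordProd q t (u ++ v) = wordProd q t u * wordProd q t v := by
  simp [wordProd]

lemma wordProd_sortedWord (M : Matrix (Fin m) (Fin n) ℕ) :
    wordProd q t (sortedWord M) = rxpow K m n q t M := by
  simp [wordProd, sortedWord, rxpow, List.flatMap, List.prod_flatten, Function.comp_def]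

lemma mkAlgHom_xf_mul_xf (a b : Fin m × Fin n) :
    RingQuot.mkAlgHom K (RRel K m n q t) (xf K m n a * xf K m n b) = wordProd q t [a, b] := by
  simp [wordProd, rx]

lemma expMatrix_antidiag_lt {i k : Fin m} {j l : Fin n} (hik : i < k) (hjl : j < l) :
    MLexLt (expMatrix [(i, l), (k, j)]) (expMatrix [(k, l), (i, j)]) := by
  refine ⟨(i, j), by simp [expMatrix, hik.ne', hjl.ne'], fun ⟨a, b⟩ hab => ?_⟩
  simp only [idx_lt_idx_iff, Fin.lt_def, Fin.ext_iff] at hab hik hjl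
  simp only [expMatrix]
  rw [List.count_eq_zero.2, List.count_eq_zero.2] <;>
    simp only [List.mem_cons, List.not_mem_nil, or_false, Prod.mk.injEq] <;>
    rintro (⟨rfl, rfl⟩ | ⟨rfl, rfl⟩) <;> omega

lemma wordProd_pair_of_idx_lt (hq0 : q ≠ 0) {a b : Fin m × Fin n} (h : idx b < idx a) :
    (∃ ε : ℤ, wordProd q t [a, b] = q ^ ε • wordProd q t [b, a]) ∨
      ∃ c d : Fin m × Fin n, MLexLt (expMatrix [c, d]) (expMatrix [a, b]) ∧
        wordProd q t [a, b] = wordProd q t [b, a] - (q - q⁻¹) • wordProd q t [c, d] := by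
  have rel := fun {x y} (hxy : RRel K m n q t x y) => RingQuot.mkAlgHom_rel K hxy
  have q_inv_swap : ∀ {x y : Rt K m n q t}, y = q • x → x = q ^ (-1 : ℤ) • y := by
    rintro x y rfl
    rw [smul_smul, zpow_neg_one, inv_mul_cancel₀ hq0, one_smul]
  obtain ⟨k, l⟩ := a
  obtain ⟨i, j⟩ := b
  rcases idx_lt_idx_iff.1 h with hik | ⟨rfl, hjl⟩
  · rcases lt_trichotomy j l with hjl | rfl | hlj
    · by_cases ht : t < idx (k, l)
      · have hrel := rel (RRel.diagComm hik hjl ht)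
        simp only [mkAlgHom_xf_mul_xf] at hrel
        exact Or.inl ⟨0, by rw [zpow_zero, one_smul, hrel]⟩
      · have hrel := rel (RRel.diagQ hik hjl (not_lt.1 ht))
        simp only [map_add, map_smul, mkAlgHom_xf_mul_xf] at hrel
        exact Or.inr ⟨(i, l), (k, j), expMatrix_antidiag_lt hik hjl,
          by rw [hrel, add_sub_cancel_right]⟩
    · have hrel := rel (RRel.colRel (j := j) hik)
      simp only [map_smul, mkAlgHom_xf_mul_xf] at hrel
      exact Or.inl ⟨-1, q_inv_swap hrel⟩
    · have hrel := rel (RRel.antiDiag hik hlj)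
      simp only [mkAlgHom_xf_mul_xf] at hrel
      exact Or.inl ⟨0, by rw [zpow_zero, one_smul, hrel]⟩
  · have hrel := rel (RRel.rowRel (i := i) hjl)
    simp only [map_smul, mkAlgHom_xf_mul_xf] at hrel
    exact Or.inl ⟨-1, q_inv_swap hrel⟩

def lowerSpan (q : K) (t : ℕ) (D : Matrix (Fin m) (Fin n) ℕ) : Submodule K (Rt K m n q t) :=
  Submodule.span K (rxpow K m n q t '' {L | MLexLt L D})

lemma rxpow_mem_lowerSpan {L D : Matrix (Fin m) (Fin n) ℕ} (h : MLexLt L D) :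
    rxpow K m n q t L ∈ lowerSpan q t D :=
  Submodule.subset_span ⟨L, h, rfl⟩

lemma lowerSpan_mono {D D' : Matrix (Fin m) (Fin n) ℕ} (h : MLexLt D D') :
    lowerSpan q t D ≤ lowerSpan q t D' :=
  Submodule.span_mono <| Set.image_mono fun _ hL => MLexLt.trans hL h

lemma exists_finsupp_of_mem_lowerSpan {D : Matrix (Fin m) (Fin n) ℕ} {x : Rt K m n q t}
    (hx : x ∈ lowerSpan q t D) :
    ∃ c : Matrix (Fin m) (Fin n) ℕ →₀ K,
      x = c.sum (fun L r => r • rxpow K m n q t L) ∧ ∀ L ∈ c.support, MLexLt L D := by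
  obtain ⟨c, hc, rfl⟩ := (Finsupp.mem_span_image_iff_linearCombination K).1 hx
  exact ⟨c, Finsupp.linearCombination_apply K c,
    fun L hL => (Finsupp.mem_supported K c).1 hc hL⟩

lemma wordProd_swap_sub_mem_lowerSpan (hq0 : q ≠ 0) (u v : List (Fin m × Fin n))
    {a b : Fin m × Fin n} (h : idx b < idx a)
    (hlow : ∀ w, MLexLt (expMatrix w) (expMatrix (u ++ a :: b :: v)) →
      wordProd q t w ∈ lowerSpan q t (expMatrix (u ++ a :: b :: v))) :
    ∃ ε : ℤ, wordProd q t (u ++ a :: b :: v) - q ^ ε • wordProd q t (u ++ b :: a :: v) ∈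
      lowerSpan q t (expMatrix (u ++ a :: b :: v)) := by
  have hsplit : ∀ c d, u ++ c :: d :: v = u ++ ([c, d] ++ v) := fun _ _ => rfl
  simp only [hsplit, wordProd_append] at hlow ⊢
  rcases wordProd_pair_of_idx_lt (t := t) hq0 h with ⟨ε, hε⟩ | ⟨c, d, hcd, hε⟩
  · refine ⟨ε, ?_⟩
    rw [hε, smul_mul_assoc, mul_smul_comm, sub_self]
    exact zero_mem _
  · refine ⟨0, ?_⟩
    have hlt : MLexLt (expMatrix (u ++ ([c, d] ++ v))) (expMatrix (u ++ ([a, b] ++ v))) := by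
      simpa only [expMatrix_append] using (hcd.add_right (expMatrix v)).add_left (expMatrix u)
    have hcorr := Submodule.smul_mem _ (-(q - q⁻¹)) (hlow _ hlt)
    rw [hε, zpow_zero, one_smul]
    convert hcorr using 1
    simp only [wordProd_append, sub_mul, mul_sub, smul_mul_assoc, mul_smul_comm]
    module

theorem exists_wordProd_sub_mem_lowerSpan (hq0 : q ≠ 0) (w : List (Fin m × Fin n)) :
    ∃ α : ℤ, wordProd q t w - q ^ α • rxpow K m n q t (expMatrix w) ∈
      lowerSpan q t (expMatrix w) := by
  induction w using (InvImage.wf (fun w => (expMatrix w, numInversions w))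
      (wellFounded_mLexLt.prod_lex wellFounded_lt)).induction with
  | _ w ih =>
    by_cases hw : w.IsChain (fun p p' => idx p ≤ idx p')
    · refine ⟨0, ?_⟩
      rw [zpow_zero, one_smul, ← wordProd_sortedWord, ← eq_sortedWord_expMatrix_of_isChain hw,
        sub_self]
      exact zero_mem _
    obtain ⟨u, a, b, v, rfl, hab⟩ := List.exists_eq_append_cons_cons_of_not_isChain hw
    have hba : idx b < idx a := not_le.1 hab
    have hswap : expMatrix (u ++ b :: a :: v) = expMatrix (u ++ a :: b :: v) :=
      expMatrix_perm ((List.Perm.swap a b v).append_left u)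
    obtain ⟨α, hα⟩ := ih (u ++ b :: a :: v)
      (Prod.lex_def.2 (Or.inr ⟨hswap, numInversions_swap_lt u v hba⟩))
    have hlow : ∀ w', MLexLt (expMatrix w') (expMatrix (u ++ a :: b :: v)) →
        wordProd q t w' ∈ lowerSpan q t (expMatrix (u ++ a :: b :: v)) := by
      intro w' hw'
      obtain ⟨β, hβ⟩ := ih w' (Prod.Lex.left _ _ hw')
      rw [← sub_add_cancel (wordProd q t w') (q ^ β • rxpow K m n q t (expMatrix w'))]
      exact add_mem (lowerSpan_mono hw' hβ) (Submodule.smul_mem _ _ (rxpow_mem_lowerSpan hw'))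
    obtain ⟨ε, hε⟩ := wordProd_swap_sub_mem_lowerSpan hq0 u v hba hlow
    refine ⟨ε + α, ?_⟩
    rw [hswap] at hα
    convert add_mem hε (Submodule.smul_mem _ (q ^ ε) hα) using 1
    rw [zpow_add₀ hq0, mul_smul]
    module

theorem exists_rxpow_mul_rxpow_sub_mem_lowerSpan (hq0 : q ≠ 0)
    (M N : Matrix (Fin m) (Fin n) ℕ) :
    ∃ α : ℤ, rxpow K m n q t M * rxpow K m n q t N - q ^ α • rxpow K m n q t (M + N) ∈
      lowerSpan q t (M + N) := by
  simpa only [wordProd_append, wordProd_sortedWord, expMatrix_append, expMatrix_sortedWord] using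
    exists_wordProd_sub_mem_lowerSpan (t := t) hq0 (sortedWord M ++ sortedWord N)

end Straightening

theorem statement_12_general (K : Type*) [Field K] (m n : ℕ) (q : K) (hq0 : q ≠ 0) (t : ℕ)
    (M N : Matrix (Fin m) (Fin n) ℕ) :
    (∃ (α : ℤ) (c : Matrix (Fin m) (Fin n) ℕ →₀ K),
      rxpow K m n q t M * rxpow K m n q t N =
        (q ^ α) • rxpow K m n q t (M + N) + c.sum (fun L r => r • rxpow K m n q t L) ∧
      ∀ L ∈ c.support, MLexLt L (M + N)) ∧
    ((∀ p : Fin m × Fin n, M p.1 p.2 ≤ N p.1 p.2) →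
      ∃ (α : ℤ) (c : Matrix (Fin m) (Fin n) ℕ →₀ K),
        rxpow K m n q t N =
          (q ^ α) • (rxpow K m n q t M * rxpow K m n q t (N - M)) +
            c.sum (fun L r => r • rxpow K m n q t L) ∧
        ∀ L ∈ c.support, MLexLt L N) := by
  refine ⟨?_, fun hMN => ?_⟩
  · obtain ⟨α, hα⟩ := exists_rxpow_mul_rxpow_sub_mem_lowerSpan (t := t) hq0 M N
    obtain ⟨c, hc, hlt⟩ := exists_finsupp_of_mem_lowerSpan hα
    exact ⟨α, c, by rw [← hc, add_sub_cancel], hlt⟩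
  · have hN : M + (N - M) = N := by
      ext i j
      exact Nat.add_sub_cancel' (hMN (i, j))
    obtain ⟨α, hα⟩ := exists_rxpow_mul_rxpow_sub_mem_lowerSpan (t := t) hq0 M (N - M)
    rw [hN] at hα
    obtain ⟨c, hc, hlt⟩ :=
      exists_finsupp_of_mem_lowerSpan (Submodule.smul_mem _ (-q ^ (-α)) hα)
    refine ⟨-α, c, ?_, hlt⟩
    rw [← hc, smul_sub, smul_smul, neg_mul, ← zpow_add₀ hq0, neg_add_cancel, zpow_zero]
    module

/-- Proposition: the lexicographic expression of `x^M x^N` is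
`q^α x^{M+N}` plus lexicographically smaller terms; consequently if `x^M` divides `x^N` then
`x^N = q^α x^M x^{N-M}` plus terms `≺ N`. -/
theorem statement_12 (K : Type*) [Field K] [Infinite K] (m n : ℕ) (hm : 2 ≤ m) (hn : 2 ≤ n)
    (q : K) (hq0 : q ≠ 0) (hq : NotRootOfUnity q) (t : ℕ) (ht1 : 1 ≤ t) (ht2 : t ≤ m * n)
    (M N : Matrix (Fin m) (Fin n) ℕ) :
    (∃ (α : ℤ) (c : Matrix (Fin m) (Fin n) ℕ →₀ K),
      rxpow K m n q t M * rxpow K m n q t N =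
        (q ^ α) • rxpow K m n q t (M + N) + c.sum (fun L r => r • rxpow K m n q t L) ∧
      ∀ L ∈ c.support, MLexLt L (M + N)) ∧
    ((∀ p : Fin m × Fin n, M p.1 p.2 ≤ N p.1 p.2) →
      ∃ (α : ℤ) (c : Matrix (Fin m) (Fin n) ℕ →₀ K),
        rxpow K m n q t N =
          (q ^ α) • (rxpow K m n q t M * rxpow K m n q t (N - M)) +
            c.sum (fun L r => r • rxpow K m n q t L) ∧
        ∀ L ∈ c.support, MLexLt L N) :=
  statement_12_general K m n q hq0 t M N

end QM

end
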